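/- Let x_1,...,x_n ∈ ℝ^d and y ∈ ℝ^d, and let c ∈ ℝ^d, R > 0, I ⊆ {1,...,n} satisfy ‖x_j − c‖ = R for j ∈ I and ‖x_j − c‖ > R for j ∉ I. Let S := conv{x_j : j ∈ I} and suppose y lies in the interior of S. Define C := max_i‖x_i − y‖² − min_i‖x_i − y‖² and d_S := min_{z ∈ ∂S} ‖z − y‖² (the squared distance from y to the boundary of S). Assume C > 0 and 0 < ρ < d_S / C. Then every minimizer w_ρ over Δ^n of (1/2)‖Σ_i w_i x_i − y‖² + ρ Σ_i w_i‖x_i − y‖² is supported on I, hence has at most |I| ≤ d+1 nonzero entries. -/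

import Mathlib

/-!
Write `u = c - y` and `y* = y - 2ρu`. Expanding `‖x_i - y‖²` around `c` and completing the square,
the objective at weights `v` is `½‖Σ v_i x_i - y*‖² + ρ Σ v_i ‖x_i - c‖²` plus a constant. The sum
is `R²` for weights supported on `I` and strictly larger as soon as some mass lies outside `I`,
where the points are outside the sphere. So it suffices that `y* ∈ S`: its barycentric weights
on `I` then strictly beat any weights charging an index outside `I`.

The closed ball of radius `r = √d_S` about `y` lies in `S`. Since `‖x_j - y‖² - 2⟪x_j, u⟫` is the
same for all vertices (they lie on the sphere), `C ≥ 2⟪ζ - y, u⟫` for every `ζ ∈ S`, so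
`C ≥ 2r‖u‖`. Hence `2ρ‖u‖ ≤ ρC / r < r`, i.e. `y*` lies in that ball.
-/

open scoped RealInnerProductSpace
open Finset Metric

theorem IsPreconnected.inter_frontier_nonempty {X : Type*} [TopologicalSpace X] {s t : Set X}
    (hs : IsPreconnected s) (hst : (s ∩ t).Nonempty) (hs_t : (s \ t).Nonempty) :
    (s ∩ frontier t).Nonempty := by
  by_contra! h
  have hcover : s ⊆ interior t ∪ (closure t)ᶜ := fun p hp => by
    by_cases hpi : p ∈ interior t
    · exact Or.inl hpi
    · exact Or.inr fun hpc => h.subset ⟨hp, hpc, hpi⟩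
  obtain ⟨p, hps, hpt⟩ := hst
  obtain ⟨q, hqs, hqt⟩ := hs_t
  obtain ⟨_, -, hi, hc⟩ := hs _ _ isOpen_interior isClosed_closure.isOpen_compl hcover
    ⟨p, hps, by_contra fun hp => h.subset ⟨hps, subset_closure hpt, hp⟩⟩
    ⟨q, hqs, fun hq => h.subset ⟨hqs, hq, fun hi => hqt (interior_subset hi)⟩⟩
  exact hc (subset_closure (interior_subset hi))

theorem lt_sum_mul_of_le_of_lt {ι : Type*} [Fintype ι] {w f : ι → ℝ} {a : ℝ}
    (hw : ∀ i, 0 ≤ w i) (hw1 : ∑ i, w i = 1) (hf : ∀ i, a ≤ f i) {i₀ : ι} (hi₀ : 0 < w i₀)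
    (hfi₀ : a < f i₀) : a < ∑ i, w i * f i :=
  calc a = ∑ i, w i * a := by rw [← sum_mul, hw1, one_mul]
    _ < ∑ i, w i * f i :=
      sum_lt_sum (fun i _ => mul_le_mul_of_nonneg_left (hf i) (hw i))
        ⟨i₀, mem_univ _, mul_lt_mul_of_pos_left hfi₀ hi₀⟩

section InnerProductSpace

variable {E : Type*} [NormedAddCommGroup E] [InnerProductSpace ℝ E]

theorem closedBall_subset_of_le_dist_frontier {S : Set E} (hS : IsClosed S) {y : E} (hy : y ∈ S)
    {r : ℝ} (hr : 0 < r) (h : ∀ f ∈ frontier S, r ≤ dist f y) : closedBall y r ⊆ S := by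
  have hball : ball y r ⊆ S := fun p hp => by
    by_contra hpS
    obtain ⟨f, hf, hfS⟩ := (convex_segment y p).isPreconnected.inter_frontier_nonempty
      ⟨y, left_mem_segment ℝ y p, hy⟩ ⟨p, right_mem_segment ℝ y p, hpS⟩
    exact (h f hfS).not_gt ((convex_ball y r).segment_subset (mem_ball_self hr) hp hf)
  rw [← closure_ball y hr.ne']
  exact closure_minimal hball hS

theorem mul_norm_le_of_forall_mem_closedBall_inner_le {y u : E} {r M : ℝ} (hr : 0 ≤ r)
    (h : ∀ ζ ∈ closedBall y r, ⟪ζ - y, u⟫ ≤ M) : r * ‖u‖ ≤ M := by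
  rcases eq_or_ne u 0 with rfl | hu
  · simpa using h y (mem_closedBall_self hr)
  have hζ : y + r • (‖u‖⁻¹ • u) ∈ closedBall y r := by
    rw [mem_closedBall, dist_eq_norm, add_sub_cancel_left, norm_smul, norm_smul, norm_inv,
      norm_norm, inv_mul_cancel₀ (norm_ne_zero_iff.mpr hu), Real.norm_of_nonneg hr, mul_one]
  have := h _ hζ
  rw [add_sub_cancel_left, real_inner_smul_left, real_inner_smul_left,
    real_inner_self_eq_norm_sq] at this
  field_simp at this
  linarith

theorem exists_mem_inner_le_of_mem_convexHull {s : Set E} {ζ : E} (hζ : ζ ∈ convexHull ℝ s)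
    (u : E) : ∃ p ∈ s, ⟪ζ, u⟫ ≤ ⟪p, u⟫ :=
  ((innerₛₗ ℝ).flip u).convexOn (convex_convexHull ℝ s)
    |>.exists_ge_of_mem_convexHull (subset_convexHull ℝ s) hζ

theorem exists_mem_le_inner_of_mem_convexHull {s : Set E} {ζ : E} (hζ : ζ ∈ convexHull ℝ s)
    (u : E) : ∃ p ∈ s, ⟪p, u⟫ ≤ ⟪ζ, u⟫ :=
  ((innerₛₗ ℝ).flip u).concaveOn (convex_convexHull ℝ s)
    |>.exists_le_of_mem_convexHull (subset_convexHull ℝ s) hζ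

theorem norm_sub_sq_eq (p y c : E) :
    ‖p - y‖ ^ 2 = ‖p - c‖ ^ 2 + 2 * ⟪p - c, c - y⟫ + ‖c - y‖ ^ 2 := by
  rw [← norm_add_sq_real, sub_add_sub_cancel]

variable {ι : Type*} [Fintype ι]

theorem exists_weights_of_mem_convexHull_image [DecidableEq ι] (x : ι → E) (I : Finset ι)
    {ζ : E} (hζ : ζ ∈ convexHull ℝ (x '' I)) :
    ∃ v : ι → ℝ, (∀ i, 0 ≤ v i) ∧ ∑ i, v i = 1 ∧ ∑ i, v i • x i = ζ ∧ ∀ i ∉ I, v i = 0 := by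
  suffices convexHull ℝ (x '' I) ⊆
      {ζ | ∃ v : ι → ℝ, (∀ i, 0 ≤ v i) ∧ ∑ i, v i = 1 ∧ ∑ i, v i • x i = ζ ∧ ∀ i ∉ I, v i = 0} from
    this hζ
  refine convexHull_min ?_ ?_
  · rintro _ ⟨j, hj, rfl⟩
    refine ⟨Pi.single j 1, fun i => ?_, by simp, by simp [Pi.single_apply], fun i hi => ?_⟩
    · simp only [Pi.single_apply]; split_ifs <;> norm_num
    · exact Pi.single_eq_of_ne (ne_of_mem_of_not_mem hj hi).symm _
  · rintro _ ⟨v, hv0, hv1, rfl, hvI⟩ _ ⟨v', hv0', hv1', rfl, hvI'⟩ a b ha hb hab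
    refine ⟨a • v + b • v', fun i => ?_, ?_, ?_, fun i hi => ?_⟩
    · exact add_nonneg (mul_nonneg ha (hv0 i)) (mul_nonneg hb (hv0' i))
    · simp only [Pi.add_apply, Pi.smul_apply, smul_eq_mul, sum_add_distrib, ← mul_sum, hv1, hv1',
        mul_one, hab]
    · simp only [Pi.add_apply, Pi.smul_apply, smul_eq_mul, add_smul, mul_smul, sum_add_distrib,
        ← smul_sum]
    · simp [hvI i hi, hvI' i hi]

theorem sum_mul_norm_sub_sq_eq (x : ι → E) (y c : E) {v : ι → ℝ} (hv : ∑ i, v i = 1) :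
    ∑ i, v i * ‖x i - y‖ ^ 2 =
      ∑ i, v i * ‖x i - c‖ ^ 2 + 2 * ⟪∑ i, v i • x i - c, c - y⟫ + ‖c - y‖ ^ 2 := by
  have hbary : ∑ i, v i • x i - c = ∑ i, v i • (x i - c) := by
    simp only [smul_sub, sum_sub_distrib, ← sum_smul, hv, one_smul]
  rw [hbary, sum_inner, sum_congr rfl fun i _ => congrArg (v i * ·) (norm_sub_sq_eq (x i) y c)]
  simp only [real_inner_smul_left, mul_add, sum_add_distrib, mul_sum, ← sum_mul, hv, one_mul,
    mul_left_comm (v _) 2]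

theorem half_norm_sq_add_mul_sum_eq (x : ι → E) (y c : E) (ρ : ℝ) {v : ι → ℝ}
    (hv : ∑ i, v i = 1) :
    1 / 2 * ‖∑ i, v i • x i - y‖ ^ 2 + ρ * ∑ i, v i * ‖x i - y‖ ^ 2 =
      1 / 2 * ‖∑ i, v i • x i - (y - (2 * ρ) • (c - y))‖ ^ 2 + ρ * ∑ i, v i * ‖x i - c‖ ^ 2
        - (2 * ρ ^ 2 + ρ) * ‖c - y‖ ^ 2 := by
  rw [sum_mul_norm_sub_sq_eq x y c hv]
  set z := ∑ i, v i • x i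
  rw [show z - (y - (2 * ρ) • (c - y)) = (z - y) + (2 * ρ) • (c - y) by abel,
    show z - c = (z - y) - (c - y) by abel, norm_add_sq_real, inner_sub_left, inner_smul_right,
    norm_smul, real_inner_self_eq_norm_sq, Real.norm_eq_abs, mul_pow, sq_abs]
  ring

theorem two_inner_sub_le_sup'_sub_inf' (hne : (univ : Finset ι).Nonempty) (x : ι → E) {c : E}
    {R : ℝ} {I : Finset ι} (hI : ∀ j ∈ I, ‖x j - c‖ = R) {y ζ : E}
    (hy : y ∈ convexHull ℝ (x '' I)) (hζ : ζ ∈ convexHull ℝ (x '' I)) :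
    2 * ⟪ζ - y, c - y⟫ ≤
      univ.sup' hne (fun i => ‖x i - y‖ ^ 2) - univ.inf' hne (fun i => ‖x i - y‖ ^ 2) := by
  obtain ⟨_, ⟨j₁, hj₁, rfl⟩, h₁⟩ := exists_mem_inner_le_of_mem_convexHull hζ (c - y)
  obtain ⟨_, ⟨j₂, hj₂, rfl⟩, h₂⟩ := exists_mem_le_inner_of_mem_convexHull hy (c - y)
  have hvertex : ∀ j ∈ I,
      ‖x j - y‖ ^ 2 = R ^ 2 + 2 * ⟪x j, c - y⟫ - 2 * ⟪c, c - y⟫ + ‖c - y‖ ^ 2 := fun j hj => by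
    rw [norm_sub_sq_eq _ y c, hI j hj, inner_sub_left]
    ring
  have hsup := le_sup' (fun i => ‖x i - y‖ ^ 2) (mem_univ j₁)
  have hinf := inf'_le (fun i => ‖x i - y‖ ^ 2) (mem_univ j₂)
  rw [inner_sub_left]
  linarith [hvertex j₁ hj₁, hvertex j₂ hj₂]

end InnerProductSpace

theorem stmt11_general {d n : ℕ} (x : Fin n → EuclideanSpace ℝ (Fin d))
    (y : EuclideanSpace ℝ (Fin d))
    (hne : (Finset.univ : Finset (Fin n)).Nonempty)
    (c : EuclideanSpace ℝ (Fin d)) (R : ℝ) (hR : 0 < R)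
    (I : Finset (Fin n))
    (hI : ∀ j ∈ I, ‖x j - c‖ = R) (hI' : ∀ j ∉ I, R < ‖x j - c‖)
    (hy : y ∈ interior (convexHull ℝ (x '' (I : Set (Fin n)))))
    (ρ : ℝ) (hρ : 0 < ρ)
    (hC : 0 < Finset.univ.sup' hne (fun i => ‖x i - y‖ ^ 2)
            - Finset.univ.inf' hne (fun i => ‖x i - y‖ ^ 2))
    (hρ' : ρ < sInf ((fun z => ‖z - y‖ ^ 2) ''
              frontier (convexHull ℝ (x '' (I : Set (Fin n))))) /
            (Finset.univ.sup' hne (fun i => ‖x i - y‖ ^ 2)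
              - Finset.univ.inf' hne (fun i => ‖x i - y‖ ^ 2)))
    (wρ : Fin n → ℝ) (hwρ : ∀ i, 0 ≤ wρ i) (hwρ1 : ∑ i, wρ i = 1)
    (hmin : ∀ v : Fin n → ℝ, (∀ i, 0 ≤ v i) → ∑ i, v i = 1 →
      (1 / 2) * ‖(∑ i, wρ i • x i) - y‖ ^ 2 + ρ * ∑ i, wρ i * ‖x i - y‖ ^ 2 ≤
      (1 / 2) * ‖(∑ i, v i • x i) - y‖ ^ 2 + ρ * ∑ i, v i * ‖x i - y‖ ^ 2) :
    ∀ i ∉ I, wρ i = 0 := by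
  intro i₀ hi₀
  by_contra hw₀
  set S := convexHull ℝ (x '' (I : Set (Fin n)))
  set C := univ.sup' hne (fun i => ‖x i - y‖ ^ 2) - univ.inf' hne (fun i => ‖x i - y‖ ^ 2)
  set D := sInf ((fun z => ‖z - y‖ ^ 2) '' frontier S)
  have hρC := (lt_div_iff₀ hC).mp hρ'
  have hD : 0 < D := (mul_pos hρ hC).trans hρC
  have hball : closedBall y √D ⊆ S :=
    closedBall_subset_of_le_dist_frontier ((x '' I).toFinite.isClosed_convexHull ℝ)
      (interior_subset hy) (Real.sqrt_pos.mpr hD) fun f hf => by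
        rw [dist_eq_norm, ← Real.sqrt_sq (norm_nonneg (f - y))]
        exact Real.sqrt_le_sqrt (csInf_le ⟨0, by rintro _ ⟨_, -, rfl⟩; positivity⟩ ⟨f, hf, rfl⟩)
  have hwidth : √D * ‖c - y‖ ≤ C / 2 :=
    mul_norm_le_of_forall_mem_closedBall_inner_le (Real.sqrt_nonneg D) fun ζ hζ => by
      linarith [two_inner_sub_le_sup'_sub_inf' hne x hI (interior_subset hy) (hball hζ)]
  have hstar : y - (2 * ρ) • (c - y) ∈ S := hball <| by
    rw [mem_closedBall, dist_eq_norm, sub_sub_cancel_left, norm_neg, norm_smul,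
      Real.norm_of_nonneg (by positivity)]
    nlinarith [Real.sq_sqrt hD.le, Real.sqrt_pos.mpr hD, norm_nonneg (c - y)]
  obtain ⟨v, hv0, hv1, hvx, hvI⟩ := exists_weights_of_mem_convexHull_image x I hstar
  have hvR : ∑ i, v i * ‖x i - c‖ ^ 2 = R ^ 2 := by
    rw [sum_congr rfl fun i _ => ?_, ← sum_mul, hv1, one_mul]
    by_cases hi : i ∈ I
    · rw [hI i hi]
    · rw [hvI i hi, zero_mul, zero_mul]
  have hwR : R ^ 2 < ∑ i, wρ i * ‖x i - c‖ ^ 2 :=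
    lt_sum_mul_of_le_of_lt hwρ hwρ1
      (fun i => pow_le_pow_left₀ hR.le (if hi : i ∈ I then (hI i hi).ge else (hI' i hi).le) 2)
      ((hwρ i₀).lt_of_ne' hw₀) (pow_lt_pow_left₀ (hI' i₀ hi₀) hR.le two_ne_zero)
  have hopt := hmin v hv0 hv1
  rw [half_norm_sq_add_mul_sum_eq x y c ρ hwρ1, half_norm_sq_add_mul_sum_eq x y c ρ hv1, hvx,
    sub_self, norm_zero, hvR] at hopt
  nlinarith [mul_lt_mul_of_pos_left hwR hρ]

theorem stmt11 {d n : ℕ} (x : Fin n → EuclideanSpace ℝ (Fin d))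
    (y : EuclideanSpace ℝ (Fin d))
    (hne : (Finset.univ : Finset (Fin n)).Nonempty)
    (c : EuclideanSpace ℝ (Fin d)) (R : ℝ) (hR : 0 < R)
    (I : Finset (Fin n)) (hcard : I.card ≤ d + 1)
    (hI : ∀ j ∈ I, ‖x j - c‖ = R) (hI' : ∀ j ∉ I, R < ‖x j - c‖)
    (hy : y ∈ interior (convexHull ℝ (x '' (I : Set (Fin n)))))
    (ρ : ℝ) (hρ : 0 < ρ)
    (hC : 0 < Finset.univ.sup' hne (fun i => ‖x i - y‖ ^ 2)
            - Finset.univ.inf' hne (fun i => ‖x i - y‖ ^ 2))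
    (hρ' : ρ < sInf ((fun z => ‖z - y‖ ^ 2) ''
              frontier (convexHull ℝ (x '' (I : Set (Fin n))))) /
            (Finset.univ.sup' hne (fun i => ‖x i - y‖ ^ 2)
              - Finset.univ.inf' hne (fun i => ‖x i - y‖ ^ 2)))
    (wρ : Fin n → ℝ) (hwρ : ∀ i, 0 ≤ wρ i) (hwρ1 : ∑ i, wρ i = 1)
    (hmin : ∀ v : Fin n → ℝ, (∀ i, 0 ≤ v i) → ∑ i, v i = 1 →
      (1 / 2) * ‖(∑ i, wρ i • x i) - y‖ ^ 2 + ρ * ∑ i, wρ i * ‖x i - y‖ ^ 2 ≤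
      (1 / 2) * ‖(∑ i, v i • x i) - y‖ ^ 2 + ρ * ∑ i, v i * ‖x i - y‖ ^ 2) :
    ∀ i ∉ I, wρ i = 0 :=
  stmt11_general x y hne c R hR I hI hI' hy ρ hρ hC hρ' wρ hwρ hwρ1 hmin
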